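/- If a polymatroid f on {s}∪P realizes a connected access structure A ⊆ 2^P, then f is connected as a polymatroid: for every partition of {s}∪P into nonempty A, B, f(A)+f(B) > f({s}∪P). -/

import Mathlib

/-!
Write `M = {s} ∪ P`, put the secret `s` in `A` and pick a participant `i ∈ B`. Connectedness
gives an unauthorized `C ⊆ P` for which `C ∪ {i}` is authorized. For a submodular `f` the
"mutual information" `f X + f Y - f (X ∪ Y)` of disjoint sets only decreases when the sets
shrink, so with `C_A = C ∩ A` and `C_B = C ∩ B`
`f A + f B - f M ≥ f (s ∪ C_A) + f (i ∪ C_B) - f (s ∪ i ∪ C)`.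
Since `C ∪ {i}` is authorized, `f (s ∪ i ∪ C) = f (i ∪ C) ≤ f C_A + f (i ∪ C_B)`, so the right
side is at least `f (s ∪ C_A) - f C_A ≥ f (s ∪ C) - f C`, which is `f {s}` because `C` is
unauthorized; and `f {s} > 0`, since otherwise no set could be unauthorized.
-/

/-- The polymatroid rank function `f` on ground set `{s} ∪ P` realizes the access
structure `𝒜 ⊆ 2^P`. -/
def Realizes {α : Type*} [DecidableEq α] (s : α) (P : Finset α) (𝒜 : Set (Finset α))
    (f : Finset α → ℝ) : Prop :=
  ∀ A : Finset α, A ⊆ P →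
    (A ∈ 𝒜 ↔ f (insert s A) = f A) ∧ (A ∉ 𝒜 ↔ f (insert s A) = f A + f {s})

open Finset

section

variable {α : Type*} [DecidableEq α]

def SubmodularOn (M : Finset α) (f : Finset α → ℝ) : Prop :=
  ∀ A B : Finset α, A ⊆ M → B ⊆ M → f (A ∪ B) + f (A ∩ B) ≤ f A + f B

namespace SubmodularOn

variable {M : Finset α} {f : Finset α → ℝ}

theorem union_le_add (hf : SubmodularOn M f) (hnonneg : ∀ X ⊆ M, 0 ≤ f X) {A B : Finset α}
    (hA : A ⊆ M) (hB : B ⊆ M) : f (A ∪ B) ≤ f A + f B := by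
  linarith [hf A B hA hB, hnonneg (A ∩ B) (inter_subset_left.trans hA)]

theorem sub_le_sub_of_subset (hf : SubmodularOn M f) {X Y Z : Finset α} (hXY : X ⊆ Y)
    (hYZ : Y ∪ Z ⊆ M) (hdisj : Disjoint Y Z) : f (Y ∪ Z) - f Y ≤ f (X ∪ Z) - f X := by
  have hinter : (X ∪ Z) ∩ Y = X := by
    rw [union_inter_distrib_right, inter_eq_left.mpr hXY,
      disjoint_iff_inter_eq_empty.mp hdisj.symm, union_empty]
  have hunion : (X ∪ Z) ∪ Y = Y ∪ Z := by
    rw [union_right_comm, union_eq_right.mpr hXY]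
  have := hf (X ∪ Z) Y ((union_subset_union_left hXY).trans hYZ) (subset_union_left.trans hYZ)
  rw [hinter, hunion] at this
  linarith

theorem add_sub_union_mono (hf : SubmodularOn M f) {A B A' B' : Finset α} (hA : A' ⊆ A)
    (hB : B' ⊆ B) (hAB : A ∪ B ⊆ M) (hdisj : Disjoint A B) :
    f A' + f B' - f (A' ∪ B') ≤ f A + f B - f (A ∪ B) := by
  have shrinkA := hf.sub_le_sub_of_subset hA hAB hdisj
  have shrinkB := hf.sub_le_sub_of_subset hB
    (by rw [union_comm]; exact (union_subset_union_left hA).trans hAB)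
    (hdisj.mono_left hA).symm
  rw [union_comm B, union_comm B'] at shrinkB
  linarith

theorem sub_le_add_sub_union (hf : SubmodularOn M f) (hnonneg : ∀ X ⊆ M, 0 ≤ f X)
    {A B C : Finset α} {s i : α} (hsA : s ∈ A) (hiB : i ∈ B) (hAB : A ∪ B ⊆ M)
    (hdisj : Disjoint A B) (hC : C ⊆ A ∪ B) (hsC : s ∉ C)
    (hiC : f (insert s (insert i C)) = f (insert i C)) :
    f (insert s C) - f C ≤ f A + f B - f (A ∪ B) := by
  have hCA : C ∩ A ⊆ M := inter_subset_right.trans (subset_union_left.trans hAB)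
  have hCB : insert i (C ∩ B) ⊆ M :=
    insert_subset (hAB (mem_union_right A hiB))
      (inter_subset_right.trans (subset_union_right.trans hAB))
  have hsplit : C ∩ A ∪ C ∩ B = C := by
    rw [← inter_union_distrib_left, inter_eq_left.mpr hC]
  have shrink := hf.add_sub_union_mono (insert_subset hsA (inter_subset_right (s₁ := C)))
    (insert_subset hiB (inter_subset_right (s₁ := C))) hAB hdisj
  rw [insert_union, union_insert, hsplit, hiC] at shrink
  have subadd := hf.union_le_add hnonneg hCA hCB
  rw [union_insert, hsplit] at subadd
  have marginal := hf.sub_le_sub_of_subset (Z := {s}) (inter_subset_left (s₂ := A))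
    (union_subset (hC.trans hAB) (singleton_subset_iff.mpr (hAB (mem_union_left B hsA))))
    (disjoint_singleton_right.mpr hsC)
  rw [union_comm, ← insert_eq, union_comm, ← insert_eq] at marginal
  linarith

end SubmodularOn

namespace Realizes

variable {s : α} {P : Finset α} {𝒜 : Set (Finset α)} {f : Finset α → ℝ}

theorem singleton_ne_zero (hreal : Realizes s P 𝒜 f) {C : Finset α} (hCP : C ⊆ P)
    (hC : C ∉ 𝒜) : f {s} ≠ 0 := by
  intro h0
  apply hC
  rw [(hreal C hCP).1, (hreal C hCP).2.mp hC, h0, add_zero]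

theorem secret_notMem (hreal : Realizes s P 𝒜 f) {C : Finset α} (hCP : C ⊆ P)
    (hC : C ∉ 𝒜) : s ∉ C := by
  intro hs
  apply hC
  rw [(hreal C hCP).1, insert_eq_of_mem hs]

end Realizes

end

theorem realizing_connected_is_connected_general {α : Type*} [DecidableEq α] (s : α) (P : Finset α)
    (𝒜 : Set (Finset α)) (f : Finset α → ℝ)
    (hnonneg : ∀ A, A ⊆ insert s P → 0 ≤ f A)
    (hsub : ∀ A B : Finset α, A ⊆ insert s P → B ⊆ insert s P →
        f (A ∪ B) + f (A ∩ B) ≤ f A + f B)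
    (hreal : Realizes s P 𝒜 f)
    (hconn : ∀ i ∈ P, ∃ B : Finset α, B ⊆ P \ {i} ∧ B ∉ 𝒜 ∧ insert i B ∈ 𝒜) :
    ∀ A B : Finset α, A ∪ B = insert s P → Disjoint A B → A.Nonempty → B.Nonempty →
      f A + f B > f (insert s P) := by
  intro A B hAB hdisj hA hB
  wlog hsA : s ∈ A generalizing A B
  · have hsB : s ∈ B := (mem_union.mp (hAB ▸ mem_insert_self s P)).resolve_left hsA
    rw [add_comm]
    exact this B A (union_comm A B ▸ hAB) hdisj.symm hB hA hsB
  obtain ⟨i, hiB⟩ := hB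
  have hiP : i ∈ P := by
    have hi : i ∈ insert s P := hAB ▸ mem_union_right A hiB
    exact (mem_insert.mp hi).resolve_left (by rintro rfl; exact disjoint_left.mp hdisj hsA hiB)
  obtain ⟨C, hCi, hCn, hiCa⟩ := hconn i hiP
  have hCP : C ⊆ P := hCi.trans sdiff_subset
  have hs_pos : 0 < f {s} :=
    (hnonneg {s} (singleton_subset_iff.mpr (mem_insert_self s P))).lt_of_ne'
      (hreal.singleton_ne_zero hCP hCn)
  have hgap := SubmodularOn.sub_le_add_sub_union hsub hnonneg hsA hiB hAB.le hdisj
    (hAB ▸ hCP.trans (subset_insert s P)) (hreal.secret_notMem hCP hCn)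
    ((hreal _ (insert_subset hiP hCP)).1.mp hiCa)
  rw [(hreal C hCP).2.mp hCn, hAB] at hgap
  linarith

/-- A polymatroid realizing a connected access structure is connected. -/
theorem realizing_connected_is_connected {α : Type*} [DecidableEq α] (s : α) (P : Finset α)
    (hs : s ∉ P) (𝒜 : Set (Finset α)) (f : Finset α → ℝ)
    (hempty : f ∅ = 0)
    (hnonneg : ∀ A, A ⊆ insert s P → 0 ≤ f A)
    (hmono : ∀ A B : Finset α, A ⊆ B → B ⊆ insert s P → f A ≤ f B)
    (hsub : ∀ A B : Finset α, A ⊆ insert s P → B ⊆ insert s P →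
        f (A ∪ B) + f (A ∩ B) ≤ f A + f B)
    (hreal : Realizes s P 𝒜 f)
    (hconn : ∀ i ∈ P, ∃ B : Finset α, B ⊆ P \ {i} ∧ B ∉ 𝒜 ∧ insert i B ∈ 𝒜) :
    ∀ A B : Finset α, A ∪ B = insert s P → Disjoint A B → A.Nonempty → B.Nonempty →
      f A + f B > f (insert s P) :=
  realizing_connected_is_connected_general s P 𝒜 f hnonneg hsub hreal hconn
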